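/- arXiv:0705.2460 — 3 statements merged into one kernel-verified Lean document; each statement's English description precedes it below -/
import Mathlib

section
/- Invariance of the functions φ_n(t,x) := (1/√2) t^{-(n+1)/2} e^{-x²/(4t)} φ_n(x/√(2t)) under the heat kernel: for 0 < t₁ < t₂ and x₂ ∈ ℝ, ∫_ℝ p(t₂-t₁, x₂|x₁) φ_n(t₁, x₁) dx₁ = φ_n(t₂, x₂) for every nonnegative integer n. -/
open MeasureTheory Real

/-- The one-dimensional heat kernel `p(t, y | x)`. -/
noncomputable def heatKernel (t y x : ℝ) : ℝ :=
  (Real.sqrt (2 * π * t))⁻¹ * Real.exp (-(y - x) ^ 2 / (2 * t))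

/-- Hermite polynomials by the Rodrigues formula. -/
noncomputable def hermiteH (n : ℕ) (x : ℝ) : ℝ :=
  (-1 : ℝ) ^ n * Real.exp (x ^ 2) * iteratedDeriv n (fun y => Real.exp (-(y ^ 2))) x

/-- Hermite orthonormal functions `φ_n`. -/
noncomputable def hermiteFun (n : ℕ) (x : ℝ) : ℝ :=
  (Real.sqrt (Real.sqrt π * 2 ^ n * n.factorial))⁻¹ * Real.exp (-(x ^ 2) / 2) * hermiteH n x

/-- The space-time functions `φ_n(t,x)`. -/
noncomputable def phiT (n : ℕ) (t x : ℝ) : ℝ :=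
  (Real.sqrt 2)⁻¹ * t ^ (-(((n : ℝ) + 1) / 2)) * Real.exp (-(x ^ 2) / (4 * t)) *
    hermiteFun n (x / Real.sqrt (2 * t))

/-!
By the Rodrigues formula, `φ_n(t, ·)` is a `t`-independent multiple of the `n`-th derivative of
the heat kernel `p(t, · | 0)`. All derivatives of a Gaussian are bounded, so `∂ⁿ` commutes with
convolution against the integrable kernel `p(s, · | 0)`, and the claim follows from the
Chapman–Kolmogorov identity `p(s) ⋆ p(t) = p(s + t)`.
-/

open Filter Set ProbabilityTheory
open scoped ContDiff Topology

def BoundedDerivs (f : ℝ → ℝ) : Prop :=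
  ∀ k : ℕ, ∃ C, ∀ x, |iteratedDeriv k f x| ≤ C

theorem hasDerivAt_integral_mul_comp_sub {g f f' : ℝ → ℝ} (hg : Integrable g)
    (hf : ∀ x, HasDerivAt f (f' x) x) (hf' : Continuous f') {C C' : ℝ}
    (hC : ∀ x, |f x| ≤ C) (hC' : ∀ x, |f' x| ≤ C') (y : ℝ) :
    HasDerivAt (fun y => ∫ x, g x * f (y - x)) (∫ x, g x * f' (y - x)) y := by
  have hfc : Continuous f := continuous_iff_continuousAt.2 fun x => (hf x).continuousAt
  have hsub (y : ℝ) : Continuous fun x : ℝ => y - x := continuous_const.sub continuous_id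
  refine (hasDerivAt_integral_of_dominated_loc_of_deriv_le (F := fun y x => g x * f (y - x))
    (F' := fun y x => g x * f' (y - x)) (bound := fun x => |g x| * C')
    univ_mem (Eventually.of_forall fun y => ?_) ?_ ?_ ?_ (hg.abs.mul_const C') ?_).2
  · exact hg.aestronglyMeasurable.mul (hfc.comp (hsub y)).aestronglyMeasurable
  · exact hg.mul_bdd (hfc.comp (hsub y)).aestronglyMeasurable
      (Eventually.of_forall fun x => hC (y - x))
  · exact hg.aestronglyMeasurable.mul (hf'.comp (hsub y)).aestronglyMeasurable
  · refine Eventually.of_forall fun x z _ => ?_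
    rw [norm_mul, Real.norm_eq_abs, Real.norm_eq_abs]
    exact mul_le_mul_of_nonneg_left (hC' _) (abs_nonneg _)
  · exact Eventually.of_forall fun x z _ => ((hf (z - x)).comp_sub_const z x).const_mul (g x)

theorem iteratedDeriv_integral_mul_comp_sub {g f : ℝ → ℝ} (hg : Integrable g)
    (hf : ContDiff ℝ ∞ f) (hbdd : BoundedDerivs f) (n : ℕ) :
    iteratedDeriv n (fun y => ∫ x, g x * f (y - x)) =
      fun y => ∫ x, g x * iteratedDeriv n f (y - x) := by
  induction n with
  | zero => simp
  | succ n ih =>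
    obtain ⟨C, hC⟩ := hbdd n
    obtain ⟨C', hC'⟩ := hbdd (n + 1)
    have hderiv (x : ℝ) : HasDerivAt (iteratedDeriv n f) (iteratedDeriv (n + 1) f x) x := by
      rw [iteratedDeriv_succ]
      exact (hf.differentiable_iteratedDeriv n
        (by exact_mod_cast WithTop.coe_lt_top _) x).hasDerivAt
    ext y
    rw [iteratedDeriv_succ, ih]
    exact (hasDerivAt_integral_mul_comp_sub hg hderiv
      (hf.continuous_iteratedDeriv _ (by exact_mod_cast le_top)) hC hC' y).deriv

theorem BoundedDerivs.const_mul_comp_mul {f : ℝ → ℝ} (hf : ContDiff ℝ ∞ f)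
    (hb : BoundedDerivs f) (a c : ℝ) : BoundedDerivs fun x => a * f (c * x) := by
  intro k
  obtain ⟨C, hC⟩ := hb k
  refine ⟨|a| * |c| ^ k * C, fun x => ?_⟩
  rw [iteratedDeriv_const_mul_field,
    iteratedDeriv_comp_const_mul (hf.of_le (by exact_mod_cast le_top)),
    abs_mul, abs_mul, abs_pow, mul_assoc]
  gcongr
  exact hC _

theorem exists_abs_le_of_tendsto_cocompact {α : Type*} [TopologicalSpace α] {f : α → ℝ}
    (hf : Continuous f) (h : Tendsto f (cocompact α) (𝓝 0)) : ∃ C, ∀ x, |f x| ≤ C := by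
  let F : ZeroAtInftyContinuousMap α ℝ := ⟨⟨f, hf⟩, h⟩
  obtain ⟨C, hC⟩ := isBounded_iff_forall_norm_le.1 F.isBounded_range
  exact ⟨C, fun x => hC _ (mem_range_self x)⟩

theorem Polynomial.tendsto_aeval_mul_exp_neg_mul_sq_cocompact {R : Type*} [CommSemiring R]
    [Algebra R ℝ] (P : Polynomial R) {a : ℝ} (ha : 0 < a) :
    Tendsto (fun x => Polynomial.aeval x P * exp (-a * x ^ 2)) (cocompact ℝ) (𝓝 0) := by
  simp_rw [Polynomial.aeval_eq_sum_range, Finset.sum_mul, smul_mul_assoc]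
  rw [← Finset.sum_const_zero (s := Finset.range (P.natDegree + 1))]
  refine tendsto_finsetSum _ fun i _ => ?_
  rw [← smul_zero (P.coeff i)]
  refine Tendsto.const_smul (squeeze_zero_norm (fun x => le_of_eq ?_)
    (tendsto_rpow_abs_mul_exp_neg_mul_sq_cocompact ha i)) _
  rw [norm_mul, norm_pow, Real.norm_eq_abs, Real.norm_of_nonneg (exp_pos _).le, rpow_natCast]

theorem boundedDerivs_exp_neg_sq_div_two : BoundedDerivs fun x => exp (-(x ^ 2 / 2)) := by
  intro k
  have hcont : Continuous fun x =>
      Polynomial.aeval x (Polynomial.hermite k) * exp (-(1 / 2) * x ^ 2) := by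
    fun_prop
  obtain ⟨C, hC⟩ := exists_abs_le_of_tendsto_cocompact hcont
    ((Polynomial.hermite k).tendsto_aeval_mul_exp_neg_mul_sq_cocompact one_half_pos)
  refine ⟨C, fun x => ?_⟩
  rw [iteratedDeriv_eq_iterate, Polynomial.deriv_gaussian_eq_hermite_mul_gaussian, mul_assoc,
    abs_mul, abs_pow, abs_neg, abs_one, one_pow, one_mul]
  simpa only [neg_mul, one_div, inv_mul_eq_div] using hC x

theorem contDiff_exp_neg_sq : ContDiff ℝ ∞ fun y : ℝ => exp (-(y ^ 2)) := by fun_prop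

theorem boundedDerivs_exp_neg_sq : BoundedDerivs fun y => exp (-(y ^ 2)) := by
  have h := boundedDerivs_exp_neg_sq_div_two.const_mul_comp_mul (by fun_prop) 1 √2
  convert h using 2 with y
  rw [one_mul, mul_pow, sq_sqrt zero_le_two, mul_div_cancel_left₀ _ two_ne_zero]

theorem iteratedDeriv_exp_neg_sq (n : ℕ) (x : ℝ) :
    iteratedDeriv n (fun y => exp (-(y ^ 2))) x = (-1) ^ n * exp (-(x ^ 2)) * hermiteH n x := by
  have hexp : exp (-(x ^ 2)) * exp (x ^ 2) = 1 := by rw [← exp_add]; simp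
  have hsign : (-1 : ℝ) ^ n * (-1) ^ n = 1 := by rw [← mul_pow]; simp
  rw [hermiteH]
  linear_combination (-iteratedDeriv n (fun y => exp (-(y ^ 2))) x) *
    ((-1) ^ n * (-1) ^ n * hexp + hsign)

theorem heatKernel_eq_sub (t y x : ℝ) : heatKernel t y x = heatKernel t (y - x) 0 := by
  simp [heatKernel]

theorem heatKernel_eq_gaussianPDFReal {t : ℝ} (ht : 0 ≤ t) (y x : ℝ) :
    heatKernel t y x = gaussianPDFReal x t.toNNReal y := by
  simp [heatKernel, gaussianPDFReal, Real.coe_toNNReal _ ht]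

theorem integrable_heatKernel {t : ℝ} (ht : 0 ≤ t) (x : ℝ) :
    Integrable fun y => heatKernel t y x := by
  simp_rw [heatKernel_eq_gaussianPDFReal ht]
  exact integrable_gaussianPDFReal x _

theorem integral_heatKernel {t : ℝ} (ht : 0 < t) (x : ℝ) : ∫ y, heatKernel t y x = 1 := by
  simp_rw [heatKernel_eq_gaussianPDFReal ht.le]
  exact integral_gaussianPDFReal_eq_one x (Real.toNNReal_pos.2 ht).ne'

theorem heatKernel_mul_heatKernel {t s : ℝ} (ht : 0 < t) (hs : 0 < s) (y x z : ℝ) :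
    heatKernel t y x * heatKernel s x z =
      heatKernel (t + s) y z * heatKernel (t * s / (t + s)) x ((s * y + t * z) / (t + s)) := by
  have hts : 0 < t + s := by positivity
  have hsqrt : √(2 * π * t) * √(2 * π * s) =
      √(2 * π * (t + s)) * √(2 * π * (t * s / (t + s))) := by
    rw [← sqrt_mul (by positivity), ← sqrt_mul (by positivity)]
    congr 1
    field_simp
  simp only [heatKernel]
  rw [mul_mul_mul_comm, ← mul_inv, hsqrt, mul_mul_mul_comm, ← mul_inv, ← exp_add, ← exp_add]
  congr 2
  field_simp
  ring

theorem integral_heatKernel_mul_heatKernel {t s : ℝ} (ht : 0 < t) (hs : 0 < s) (y z : ℝ) :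
    ∫ x, heatKernel t y x * heatKernel s x z = heatKernel (t + s) y z := by
  simp_rw [heatKernel_mul_heatKernel ht hs, integral_const_mul]
  rw [integral_heatKernel (by positivity), mul_one]

theorem contDiff_heatKernel (t : ℝ) : ContDiff ℝ ∞ fun y => heatKernel t y 0 := by
  unfold heatKernel
  fun_prop

theorem heatKernel_zero_eq {t : ℝ} (ht : 0 ≤ t) :
    (fun y => heatKernel t y 0) =
      fun y => (√(2 * π * t))⁻¹ * exp (-((√(2 * t))⁻¹ * y) ^ 2) := by
  ext y
  rw [heatKernel, mul_pow, inv_pow, sq_sqrt (by positivity), sub_zero, neg_div, div_eq_inv_mul]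

theorem boundedDerivs_heatKernel {t : ℝ} (ht : 0 ≤ t) :
    BoundedDerivs fun y => heatKernel t y 0 := by
  rw [heatKernel_zero_eq ht]
  exact boundedDerivs_exp_neg_sq.const_mul_comp_mul contDiff_exp_neg_sq _ _

theorem iteratedDeriv_heatKernel_zero {t : ℝ} (ht : 0 ≤ t) (n : ℕ) (x : ℝ) :
    iteratedDeriv n (fun y => heatKernel t y 0) x =
      (√(2 * π * t))⁻¹ * (√(2 * t))⁻¹ ^ n *
        iteratedDeriv n (fun y => exp (-(y ^ 2))) ((√(2 * t))⁻¹ * x) := by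
  rw [heatKernel_zero_eq ht, iteratedDeriv_const_mul_field,
    iteratedDeriv_comp_const_mul (contDiff_exp_neg_sq.of_le (by exact_mod_cast le_top))]
  simp only [mul_assoc]

theorem rpow_neg_natCast_div_two {t : ℝ} (ht : 0 ≤ t) (m : ℕ) :
    t ^ (-((m : ℝ) / 2)) = (√t ^ m)⁻¹ := by
  rw [rpow_neg ht, sqrt_eq_rpow, ← rpow_natCast, ← rpow_mul ht, one_div_mul_eq_div]

theorem phiT_eq_iteratedDeriv_heatKernel (n : ℕ) : ∃ c : ℝ, ∀ t, 0 < t → ∀ x,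
    phiT n t x = c * iteratedDeriv n (fun y => heatKernel t y 0) x := by
  refine ⟨(-1) ^ n * √π * √2 ^ n * (√(√π * 2 ^ n * n.factorial))⁻¹,
    fun t ht x => ?_⟩
  have h2t : √(2 * t) = √2 * √t := sqrt_mul zero_le_two t
  have h2πt : √(2 * π * t) = √2 * √π * √t := by
    rw [sqrt_mul (by positivity), sqrt_mul zero_le_two]
  have hexp : exp (-(x ^ 2) / (4 * t)) * exp (-(x / √(2 * t)) ^ 2 / 2) =
      exp (-(x / √(2 * t)) ^ 2) := by
    rw [← exp_add, div_pow, sq_sqrt (by positivity)]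
    congr 1
    field_simp
    ring
  rw [phiT, hermiteFun, iteratedDeriv_heatKernel_zero ht.le, iteratedDeriv_exp_neg_sq,
    ← Nat.cast_add_one, rpow_neg_natCast_div_two ht.le, inv_mul_eq_div (√(2 * t)) x, ← hexp,
    h2πt, h2t]
  field_simp
  rw [← pow_mul, pow_mul', neg_one_sq, one_pow, one_div, inv_pow, mul_pow]
  field_simp
  ring

/-- Invariance of `φ_n(t,x)` with respect to the heat kernel. -/
theorem phi_invariance (n : ℕ) (t₁ t₂ x₂ : ℝ) (h₁ : 0 < t₁) (h₂ : t₁ < t₂) :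
    ∫ x₁ : ℝ, heatKernel (t₂ - t₁) x₂ x₁ * phiT n t₁ x₁ = phiT n t₂ x₂ := by
  obtain ⟨c, hc⟩ := phiT_eq_iteratedDeriv_heatKernel n
  have hs : 0 < t₂ - t₁ := sub_pos.2 h₂
  have chapman_kolmogorov :
      (fun y => ∫ x, heatKernel (t₂ - t₁) x 0 * heatKernel t₁ (y - x) 0) =
        fun y => heatKernel t₂ y 0 := by
    ext y
    simp_rw [← heatKernel_eq_sub, mul_comm (heatKernel (t₂ - t₁) _ 0)]
    rw [integral_heatKernel_mul_heatKernel h₁ hs, add_sub_cancel]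
  calc ∫ x₁, heatKernel (t₂ - t₁) x₂ x₁ * phiT n t₁ x₁
      = ∫ x, heatKernel (t₂ - t₁) x 0 *
          (c * iteratedDeriv n (fun y => heatKernel t₁ y 0) (x₂ - x)) := by
        rw [← integral_sub_left_eq_self _ volume x₂]
        simp_rw [hc t₁ h₁, heatKernel_eq_sub (t₂ - t₁) x₂, sub_sub_cancel]
    _ = c * iteratedDeriv n
          (fun y => ∫ x, heatKernel (t₂ - t₁) x 0 * heatKernel t₁ (y - x) 0) x₂ := by
        rw [iteratedDeriv_integral_mul_comp_sub (integrable_heatKernel hs.le 0)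
          (contDiff_heatKernel t₁) (boundedDerivs_heatKernel h₁.le), ← integral_const_mul]
        simp_rw [mul_left_comm c]
    _ = phiT n t₂ x₂ := by rw [chapman_kolmogorov, hc t₂ (h₁.trans h₂)]
end

section
/- Schur function expansion: for x = (x_1,...,x_N), y = (y_1,...,y_N) ∈ ℝ^N, det_{1≤j,k≤N}[e^{x_j y_k}] = h_N(x) h_N(y) Σ_{μ: ℓ(μ)≤N} s_μ(x) s_μ(y) / ∏_{k=1}^N Γ(μ_k + N - k + 1), where the sum runs over partitions μ of length at most N. -/
open Real

/-- The Vandermonde product `h_N(x) = ∏_{j<k}(x_k - x_j)`. -/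
noncomputable def vandermonde (N : ℕ) (x : Fin N → ℝ) : ℝ :=
  ∏ j : Fin N, ∏ k ∈ Finset.Ioi j, (x k - x j)

/-- The Schur function `s_μ(x) = det[x_j^{μ_k+N-k}] / det[x_j^{N-k}]`
(indices 0-based: the (j,k) entry is `x_j ^ (μ_k + (N-1-k))`). -/
noncomputable def schur (N : ℕ) (μ : Fin N → ℕ) (x : Fin N → ℝ) : ℝ :=
  Matrix.det (Matrix.of fun j k : Fin N => x j ^ (μ k + (N - 1 - (k : ℕ)))) /
    Matrix.det (Matrix.of fun j k : Fin N => x j ^ (N - 1 - (k : ℕ)))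

/-!
Expanding every entry `exp (x j * y k)` in its power series and multiplying out the Leibniz
formula gives `det [exp (x j * y k)] = ∑_f (∏_k y_k ^ f_k / f_k!) · a_f(x)`, a sum over all
`f : Fin N → ℕ` of alternants `a_f(x) = det [x_j ^ f_k]` (absolute convergence makes the
rearrangement legitimate). The alternant vanishes unless `f` is injective, and the injective
`f` are exactly the rearrangements `(μ + δ) ∘ σ` of the shifted partitions, `δ` the staircase.
Summing over `σ` collects `a_{μ+δ}(x) a_{μ+δ}(y) / ∏ (μ + δ)_k!`; finally
`a_{μ+δ} = ± h_N s_μ` and `Γ(μ_k + N - k) = (μ + δ)_k!`.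
-/

open Finset Equiv Function

section SeriesProduct

variable {R β : Type*} [NormedCommRing R]

theorem summable_norm_prod_pi {n : ℕ} {a : Fin n → β → R}
    (ha : ∀ k, Summable fun b => ‖a k b‖) :
    Summable fun f : Fin n → β => ‖∏ k, a k (f k)‖ := by
  induction n with
  | zero => exact Summable.of_finite
  | succ n ih =>
    rw [← (Fin.consEquiv fun _ => β).summable_iff]
    simpa [Function.comp_def, Fin.prod_univ_succ] using (ha 0).mul_norm (ih fun k => ha k.succ)

theorem hasSum_prod_pi [CompleteSpace R] {n : ℕ} {a : Fin n → β → R} {s : Fin n → R}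
    (hs : ∀ k, HasSum (a k) (s k)) (ha : ∀ k, Summable fun b => ‖a k b‖) :
    HasSum (fun f : Fin n → β => ∏ k, a k (f k)) (∏ k, s k) := by
  induction n with
  | zero => simp
  | succ n ih =>
    rw [← (Fin.consEquiv fun _ => β).hasSum_iff, Fin.prod_univ_succ]
    set tail := fun f : Fin n → β => ∏ k, a k.succ (f k)
    have htail : HasSum tail (∏ k : Fin n, s k.succ) := ih (fun k => hs k.succ) fun k => ha k.succ
    have hprod := (hs 0).mul htail
      (summable_mul_of_summable_norm (f := a 0) (g := tail) (ha 0)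
        (summable_norm_prod_pi fun k => ha k.succ))
    have hcons : (fun f => ∏ k, a k (f k)) ∘ Fin.consEquiv (fun _ => β) =
        fun p => a 0 p.1 * tail p.2 := by
      funext p
      simp [tail, Fin.prod_univ_succ]
    rwa [hcons]

end SeriesProduct

section Alternant

variable {R : Type*} [CommRing R] {n : ℕ}

def alternant (x : Fin n → R) (e : Fin n → ℕ) : R :=
  (Matrix.of fun j k => x j ^ e k).det

def staircase (n : ℕ) : Fin n → ℕ := fun k => n - 1 - k

theorem alternant_comp_perm (x : Fin n → R) (e : Fin n → ℕ) (σ : Perm (Fin n)) :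
    alternant x (e ∘ σ) = Perm.sign σ * alternant x e :=
  Matrix.det_permute' σ (Matrix.of fun j k => x j ^ e k)

theorem alternant_eq_zero_of_exponent_eq (x : Fin n → R) {e : Fin n → ℕ} {i j : Fin n}
    (hij : e i = e j) (hne : i ≠ j) : alternant x e = 0 :=
  Matrix.det_zero_of_column_eq hne fun k => by simp [hij]

theorem alternant_eq_zero_of_eq {x : Fin n → R} (e : Fin n → ℕ) {i j : Fin n}
    (hij : x i = x j) (hne : i ≠ j) : alternant x e = 0 :=
  Matrix.det_zero_of_row_eq hne <| funext fun k => by simp [hij]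

theorem staircase_eq_val_comp_rev : staircase n = (fun k : Fin n => (k : ℕ)) ∘ Fin.revPerm := by
  funext k
  simp only [staircase, comp_apply, Fin.revPerm_apply, Fin.val_rev]
  omega

theorem alternant_staircase (x : Fin n → R) :
    alternant x (staircase n) =
      Perm.sign (Fin.revPerm : Perm (Fin n)) * (Matrix.vandermonde x).det := by
  rw [staircase_eq_val_comp_rev, alternant_comp_perm]
  rfl

end Alternant

section Staircase

variable {n : ℕ}

theorem Antitone.strictAnti_add_staircase {μ : Fin n → ℕ} (hμ : Antitone μ) :
    StrictAnti (μ + staircase n) := by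
  intro k l hkl
  have hμkl := hμ hkl.le
  have hkl' : (k : ℕ) < l := hkl
  have hl := l.isLt
  simp only [Pi.add_apply, staircase]
  omega

theorem StrictAnti.antitone_add_val {g : Fin n → ℕ} (hg : StrictAnti g) :
    Antitone fun k => g k + k := by
  cases n with
  | zero => exact fun k => k.elim0
  | succ n =>
    refine Fin.antitone_iff_succ_le.mpr fun i => ?_
    have hi := hg (Fin.castSucc_lt_succ : i.castSucc < i.succ)
    simp only [Fin.val_succ, Fin.val_castSucc]
    omega

theorem StrictAnti.exists_antitone_add_staircase_eq {g : Fin n → ℕ} (hg : StrictAnti g) :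
    ∃ μ : Fin n → ℕ, Antitone μ ∧ μ + staircase n = g := by
  refine ⟨fun k => g k + k - (n - 1),
    fun k l hkl => Nat.sub_le_sub_right (hg.antitone_add_val hkl) _, ?_⟩
  funext k
  have hk := k.isLt
  have hlast : g ⟨n - 1, by omega⟩ + (n - 1) ≤ g k + k :=
    hg.antitone_add_val (Fin.mk_le_mk.mpr (by omega))
  simp only [Pi.add_apply, staircase]
  omega

theorem Function.Injective.exists_strictAnti_comp_perm {α : Type*} [LinearOrder α]
    {f : Fin n → α} (hf : Injective f) :
    ∃ (g : Fin n → α) (σ : Perm (Fin n)), StrictAnti g ∧ f = g ∘ σ := by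
  have hsort : StrictMono (f ∘ Tuple.sort f) :=
    (Tuple.monotone_sort f).strictMono_of_injective (hf.comp (Tuple.sort f).injective)
  refine ⟨f ∘ Tuple.sort f ∘ Fin.rev, (Tuple.sort f).symm.trans Fin.revPerm,
    hsort.comp_strictAnti Fin.rev_strictAnti, ?_⟩
  funext k
  simp

theorem StrictAnti.eq_of_comp_perm_eq {α : Type*} [LinearOrder α] {g g' : Fin n → α}
    {σ σ' : Perm (Fin n)} (hg : StrictAnti g) (hg' : StrictAnti g') (h : g ∘ σ = g' ∘ σ') :
    g = g' ∧ σ = σ' := by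
  have hgg' : g = g' := by
    have key := Tuple.unique_antitone (f := g ∘ σ) (σ := σ.symm) (τ := σ'.symm)
      (by simpa [Function.comp_def] using hg.antitone)
      (by rw [h]; simpa [Function.comp_def] using hg'.antitone)
    calc g = (g ∘ σ) ∘ σ.symm := by funext; simp
      _ = (g ∘ σ) ∘ σ'.symm := key
      _ = g' := by rw [h]; funext; simp
  subst hgg'
  exact ⟨rfl, Equiv.ext fun k => hg.injective (congrFun h k)⟩

end Staircase

section Reindexing

variable {n : ℕ}

def shiftedExponents (p : {μ : Fin n → ℕ // Antitone μ} × Perm (Fin n)) : Fin n → ℕ :=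
  (p.1.1 + staircase n) ∘ p.2

theorem shiftedExponents_injective : Injective (shiftedExponents (n := n)) := by
  rintro ⟨⟨μ, hμ⟩, σ⟩ ⟨⟨μ', hμ'⟩, σ'⟩ h
  obtain ⟨hμμ', rfl⟩ :=
    hμ.strictAnti_add_staircase.eq_of_comp_perm_eq hμ'.strictAnti_add_staircase h
  obtain rfl : μ = μ' := add_right_cancel hμμ'
  rfl

theorem range_shiftedExponents : Set.range (shiftedExponents (n := n)) = {f | Injective f} := by
  ext f
  constructor
  · rintro ⟨⟨⟨μ, hμ⟩, σ⟩, rfl⟩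
    exact hμ.strictAnti_add_staircase.injective.comp σ.injective
  · intro hf
    obtain ⟨g, σ, hg, rfl⟩ := hf.exists_strictAnti_comp_perm
    obtain ⟨μ, hμ, rfl⟩ := hg.exists_antitone_add_staircase_eq
    exact ⟨(⟨μ, hμ⟩, σ), rfl⟩

theorem tsum_eq_tsum_antitone_sum_perm {E : Type*} [NormedAddCommGroup E] [CompleteSpace E]
    {c : (Fin n → ℕ) → E} (hc : Summable c) (hc0 : ∀ f, ¬ Injective f → c f = 0) :
    ∑' f, c f =
      ∑' μ : {μ : Fin n → ℕ // Antitone μ}, ∑ σ : Perm (Fin n), c ((μ.1 + staircase n) ∘ σ) := by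
  have hsupp : support c ⊆ Set.range shiftedExponents := by
    rw [range_shiftedExponents]
    intro f hf
    by_contra h
    exact hf (hc0 f h)
  rw [← shiftedExponents_injective.tsum_eq hsupp,
    Summable.tsum_prod' (f := fun p => c (shiftedExponents p))
      (hc.comp_injective shiftedExponents_injective) fun _ => .of_finite]
  simp only [tsum_fintype]
  rfl

end Reindexing

theorem Int.cast_units_mul_self {R : Type*} [Ring R] (u : ℤˣ) : ((u : ℤ) : R) * u = 1 := by
  rw [← Int.cast_mul, ← Units.val_mul, Int.units_mul_self, Units.val_one, Int.cast_one]

theorem Real.hasSum_pow_div_factorial (t : ℝ) :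
    HasSum (fun m : ℕ => t ^ m / m.factorial) (Real.exp t) := by
  rw [Real.exp_eq_exp_ℝ]
  exact NormedSpace.expSeries_div_hasSum_exp t

section ExpExpansion

variable {n : ℕ} (x y : Fin n → ℝ)

noncomputable def expCoeff (f : Fin n → ℕ) : ℝ :=
  (∏ k, y k ^ f k / (f k).factorial) * alternant x f

theorem hasSum_det_exp_mul :
    HasSum (expCoeff x y) (Matrix.of fun j k => Real.exp (x j * y k)).det := by
  have hterm (σ : Perm (Fin n)) :
      HasSum (fun f : Fin n → ℕ =>
          ((Perm.sign σ : ℤ) : ℝ) * ∏ k, (x (σ k) * y k) ^ f k / (f k).factorial)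
        (((Perm.sign σ : ℤ) : ℝ) * ∏ k, Real.exp (x (σ k) * y k)) := by
    have hexp (k : Fin n) := Real.hasSum_pow_div_factorial (x (σ k) * y k)
    exact (hasSum_prod_pi hexp fun k => NormedSpace.norm_expSeries_div_summable _).mul_left _
  rw [Matrix.det_apply']
  simp only [Matrix.of_apply]
  convert hasSum_sum fun σ _ => hterm σ using 1
  funext f
  rw [expCoeff, alternant, Matrix.det_apply', Finset.mul_sum]
  refine Finset.sum_congr rfl fun σ _ => ?_
  simp only [Matrix.of_apply, mul_pow, mul_div_assoc, Finset.prod_mul_distrib]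
  ring

theorem expCoeff_eq_zero_of_not_injective {f : Fin n → ℕ} (hf : ¬Injective f) :
    expCoeff x y f = 0 := by
  obtain ⟨i, j, hij, hne⟩ := Function.not_injective_iff.mp hf
  rw [expCoeff, alternant_eq_zero_of_exponent_eq x hij hne, mul_zero]

theorem sum_expCoeff_comp_perm (e : Fin n → ℕ) :
    ∑ σ : Perm (Fin n), expCoeff x y (e ∘ σ) =
      alternant x e * alternant y e / ∏ k, ((e k).factorial : ℝ) := by
  have hy : alternant y e = ∑ σ : Perm (Fin n), ((Perm.sign σ : ℤ) : ℝ) * ∏ k, y k ^ e (σ k) := by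
    rw [alternant, ← Matrix.det_transpose, Matrix.det_apply']
    rfl
  have hfact (σ : Perm (Fin n)) : ∏ k, ((e (σ k)).factorial : ℝ) = ∏ k, ((e k).factorial : ℝ) :=
    Equiv.prod_comp σ fun k => ((e k).factorial : ℝ)
  simp only [expCoeff, alternant_comp_perm, comp_apply, prod_div_distrib, hfact, hy, mul_sum,
    sum_div]
  exact sum_congr rfl fun σ _ => by ring

end ExpExpansion

theorem vandermonde_eq_det {n : ℕ} (x : Fin n → ℝ) :
    vandermonde n x = (Matrix.vandermonde x).det :=
  (Matrix.det_vandermonde x).symm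

theorem vandermonde_mul_schur {n : ℕ} (μ : Fin n → ℕ) (x : Fin n → ℝ) :
    vandermonde n x * schur n μ x =
      Perm.sign (Fin.revPerm : Perm (Fin n)) * alternant x (μ + staircase n) := by
  have hschur : schur n μ x = alternant x (μ + staircase n) / alternant x (staircase n) := rfl
  rw [hschur, alternant_staircase, vandermonde_eq_det]
  by_cases hx : (Matrix.vandermonde x).det = 0
  · -- `schur n μ x` is a junk division by zero; both sides vanish since `x` repeats an entry.
    obtain ⟨i, j, hij, hne⟩ := Matrix.det_vandermonde_eq_zero_iff.mp hx
    simp [hx, alternant_eq_zero_of_eq _ hij hne]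
  · have hε := Int.cast_units_mul_self (R := ℝ) (Perm.sign (Fin.revPerm : Perm (Fin n)))
    have hε0 : ((Perm.sign (Fin.revPerm : Perm (Fin n)) : ℤ) : ℝ) ≠ 0 :=
      left_ne_zero_of_mul_eq_one hε
    rw [mul_div_assoc', div_eq_iff (mul_ne_zero hε0 hx)]
    linear_combination (-(alternant x (μ + staircase n) * (Matrix.vandermonde x).det)) * hε

theorem gamma_add_sub_eq_factorial {n : ℕ} (μ : Fin n → ℕ) (k : Fin n) :
    Real.Gamma ((μ k : ℝ) + n - (k : ℕ)) = ((μ + staircase n) k).factorial := by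
  have hk : (μ + staircase n) k + 1 + k = μ k + n := by
    have hkn := k.isLt
    simp only [Pi.add_apply, staircase]
    omega
  have hcast : (((μ + staircase n) k : ℕ) : ℝ) + 1 = (μ k : ℝ) + n - k := by
    have hk' := congrArg (Nat.cast (R := ℝ)) hk
    push_cast at hk'
    linarith
  rw [← hcast, Real.Gamma_nat_eq_factorial]

/-- Schur function expansion of `det[e^{x_j y_k}]`; partitions of length at most `N`
are encoded as antitone functions `μ : Fin N → ℕ`. -/
theorem schur_expansion (N : ℕ) (x y : Fin N → ℝ) :
    Matrix.det (Matrix.of fun j k : Fin N => Real.exp (x j * y k)) =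
      vandermonde N x * vandermonde N y *
        ∑' μ : {f : Fin N → ℕ // Antitone f},
          schur N μ.1 x * schur N μ.1 y /
            ∏ k : Fin N, Real.Gamma ((μ.1 k : ℝ) + N - (k : ℕ)) := by
  have hexp := hasSum_det_exp_mul x y
  rw [← hexp.tsum_eq, tsum_eq_tsum_antitone_sum_perm hexp.summable
    fun f => expCoeff_eq_zero_of_not_injective x y, ← tsum_mul_left]
  refine tsum_congr fun μ => ?_
  simp only [sum_expCoeff_comp_perm, gamma_add_sub_eq_factorial]
  rw [mul_div_assoc', mul_mul_mul_comm, vandermonde_mul_schur, vandermonde_mul_schur,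
    mul_mul_mul_comm, Int.cast_units_mul_self, one_mul]
end

section
/- The Vandermonde determinant h_N(x) = ∏_{1≤j<k≤N}(x_k - x_j) is harmonic on ℝ^N: Σ_{j=1}^N ∂²h_N/∂x_j² = 0. -/
/-!
The Vandermonde product is `det V` with `V i k = x i ^ k`, and `∂²/∂x_j²` only touches row `j`,
so by multilinearity `Δ det V = ∑_j det (V with row j replaced by its second derivative)`.
Both this row sum and the corresponding column sum are the derivative of `det` at `V` in the
direction of the matrix `V'' i k = k (k - 1) x_i ^ (k - 2)`, so `Δ det V = ∑_k det (V with column k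
replaced by column k of V'')`. Column `k` of `V''` is a multiple of column `k - 2` of `V` (or zero),
so every term vanishes.
-/

theorem LinearMap.iteratedDeriv_comp_pi {𝕜 F ι : Type*} [NontriviallyNormedField 𝕜]
    [NormedAddCommGroup F] [NormedSpace 𝕜 F] [Fintype ι] [DecidableEq ι]
    (L : (ι → 𝕜) →ₗ[𝕜] F) {γ : 𝕜 → ι → 𝕜} {m : ℕ} {t : 𝕜}
    (hγ : ∀ i, ContDiffAt 𝕜 m (γ · i) t) :
    iteratedDeriv m (fun s => L (γ s)) t = L (fun i => iteratedDeriv m (γ · i) t) := by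
  rw [funext fun s => L.pi_apply_eq_sum_univ (γ s), L.pi_apply_eq_sum_univ]
  exact (iteratedDeriv_fun_sum fun i _ => (hγ i).smul contDiffAt_const).trans
    (Finset.sum_congr rfl fun i _ => iteratedDeriv_smul_const (hγ i) _)

namespace Matrix

variable {n R : Type*} [Fintype n] [DecidableEq n]

theorem iteratedDeriv_det_updateRow {𝕜 : Type*} [NontriviallyNormedField 𝕜]
    (M : Matrix n n 𝕜) (j : n) {γ : 𝕜 → n → 𝕜} {m : ℕ} {t : 𝕜}
    (hγ : ∀ k, ContDiffAt 𝕜 m (γ · k) t) :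
    iteratedDeriv m (fun s => (M.updateRow j (γ s)).det) t
      = (M.updateRow j fun k => iteratedDeriv m (γ · k) t).det :=
  (detRowAlternating.toMultilinearMap.toLinearMap M j).iteratedDeriv_comp_pi hγ

theorem sum_det_updateRow_eq_sum_det_updateCol [CommRing R] (A C : Matrix n n R) :
    ∑ i, (A.updateRow i (C i)).det = ∑ j, (A.updateCol j fun k => C k j).det := by
  simp only [det_apply]
  rw [Finset.sum_comm, Finset.sum_comm (γ := n)]
  refine Finset.sum_congr rfl fun σ _ => ?_
  rw [← Finset.smul_sum, ← Finset.smul_sum, ← Equiv.sum_comp σ]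
  refine congrArg _ (Finset.sum_congr rfl fun i _ => Finset.prod_congr rfl fun l _ => ?_)
  simp only [updateRow_apply, updateCol_apply, σ.injective.eq_iff]
  split_ifs with h
  · rw [h]
  · rfl

theorem vandermonde_update [CommRing R] {N : ℕ} (x : Fin N → R) (j : Fin N) (s : R) :
    vandermonde (Function.update x j s) = (vandermonde x).updateRow j fun k => s ^ (k : ℕ) := by
  ext i k
  by_cases h : i = j
  · subst h; simp
  · simp [h]

theorem det_updateCol_vandermonde_iteratedDeriv_two {N : ℕ} (x : Fin N → ℝ) (k : Fin N) :
    ((vandermonde x).updateCol k fun i => iteratedDeriv 2 (· ^ (k : ℕ)) (x i)).det = 0 := by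
  have hcol : (fun i => iteratedDeriv 2 (· ^ (k : ℕ)) (x i))
      = ((k : ℕ).descFactorial 2 : ℝ) • fun i => x i ^ ((k : ℕ) - 2) := by
    ext i; simp
  rw [hcol, det_updateCol_smul]
  rcases lt_or_ge (k : ℕ) 2 with hk | hk
  · rw [Nat.descFactorial_eq_zero_iff_lt.mpr hk, Nat.cast_zero, zero_mul]
  · let k' : Fin N := ⟨k - 2, by omega⟩
    have hk' : k' ≠ k := Fin.ne_of_val_ne (by simp only [k']; omega)
    have : (fun i => x i ^ ((k : ℕ) - 2)) = fun i => vandermonde x i k' := rfl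
    rw [this, det_updateCol_eq_zero hk', mul_zero]

end Matrix

/-- The Vandermonde determinant is harmonic: `Σ_j ∂²h_N/∂x_j² = 0`. -/
theorem vandermonde_harmonic (N : ℕ) (x : Fin N → ℝ) :
    ∑ j : Fin N,
        iteratedDeriv 2 (fun s => vandermonde N (Function.update x j s)) (x j) = 0 := by
  simp only [vandermonde, ← Matrix.det_vandermonde, Matrix.vandermonde_update]
  rw [Finset.sum_congr rfl fun (j : Fin N) _ =>
    Matrix.iteratedDeriv_det_updateRow _ j fun k => (contDiff_id.pow (k : ℕ)).contDiffAt]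
  exact (Matrix.sum_det_updateRow_eq_sum_det_updateCol _
    fun (j k : Fin N) => iteratedDeriv 2 (· ^ (k : ℕ)) (x j)).trans
    (Finset.sum_eq_zero fun k _ => Matrix.det_updateCol_vandermonde_iteratedDeriv_two x k)
end
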